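/- Suppose X is a Borel space, f : X → ℝ, g : X → (0,∞), h : X → ℝ, T : X → X, w : X → (0,∞) are Borel, h is T-invariant (h∘T = h), h(x) ≤ limsup_n R_n(x) for all x ∈ X, and μ is a T-conservative T-w-invariant Borel measure for which f, g, and g·h are μ-integrable. Then ∫ f dμ ≥ ∫ g·h dμ. -/

import Mathlib

open Finset Filter MeasureTheory

noncomputable def cocycle {X : Type*} (T : X → X) (w : X → ℝ) (x : X) (k : ℕ) : ℝ :=
  ∏ j ∈ Finset.range k, w (T^[j] x)

noncomputable def wSum {X : Type*} (T : X → X) (w : X → ℝ) (h : X → ℝ) (n : ℕ) (x : X) : ℝ :=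
  ∑ k ∈ Finset.range n, h (T^[k] x) * cocycle T w x k

noncomputable def ratio {X : Type*} (T : X → X) (w f g : X → ℝ) (n : ℕ) (x : X) : ℝ :=
  wSum T w f n x / wSum T w g n x

def IsWandering {X : Type*} (T : X → X) (W : Set X) : Prop :=
  ∀ x : X, (W ∩ Set.range fun k : ℕ => T^[k] x).Subsingleton

def IsConservative {X : Type*} [MeasurableSpace X] (T : X → X)
    (μ : Measure X) : Prop :=
  ∀ W : Set X, MeasurableSet W → IsWandering T W → μ W = 0

def IsTWInvariant {X : Type*} [MeasurableSpace X] (T : X → X) (w : X → ℝ)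
    (μ : Measure X) : Prop :=
  ∀ B : Set X, MeasurableSet B →
    μ B = ∫⁻ x in T ⁻¹' B, ENNReal.ofReal (w x) ∂μ


open Topology

/-!
Hopf's maximal ergodic lemma for the weighted sums `S_φ^n` (the transfer `u ↦ w · u ∘ T` preserves
`∫ · dμ` by `T`-`w`-invariance) gives `0 ≤ ∫ φ dμ` over `{x | ∃ n, 0 < S_φ^n x}`. For
`φ = f - (h - ε) g` this set has full measure: as `h` is invariant, `S_φ^n = S_f^n - (h - ε) S_g^n`,
so off this set `R_n ≤ h - ε` for all `n ≥ 1`, which `h ≤ limsup R_n` allows only where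
`R_n → -∞`, a null set. Hence `∫ g h ≤ ∫ f + ε ∫ g` for every `ε > 0`.
-/

section WeightedSums

variable {X : Type*} {T : X → X} {w : X → ℝ}

lemma cocycle_succ (x : X) (k : ℕ) :
    cocycle T w x (k + 1) = w x * cocycle T w (T x) k := by
  simp only [cocycle, prod_range_succ', Function.iterate_succ_apply, Function.iterate_zero_apply]
  ring

@[simp]
lemma wSum_zero (φ : X → ℝ) (x : X) : wSum T w φ 0 x = 0 := by
  simp [wSum]

lemma wSum_succ (φ : X → ℝ) (n : ℕ) (x : X) :
    wSum T w φ (n + 1) x = φ x + w x * wSum T w φ n (T x) := by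
  simp only [wSum, sum_range_succ', cocycle_succ, Function.iterate_succ_apply, mul_sum]
  simp only [cocycle, range_zero, prod_empty, Function.iterate_zero_apply, mul_one]
  rw [add_comm]
  exact congrArg (φ x + ·) (sum_congr rfl fun k _ => by ring)

lemma wSum_neg (φ : X → ℝ) (n : ℕ) (x : X) :
    wSum T w (fun y => -φ y) n x = -wSum T w φ n x := by
  simp [wSum, neg_mul, sum_neg_distrib]

lemma wSum_sub_mul_of_comp_eq {φ g c : X → ℝ} (hc : c ∘ T = c) (n : ℕ) (x : X) :
    wSum T w (fun y => φ y - c y * g y) n x = wSum T w φ n x - c x * wSum T w g n x := by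
  have hiter : ∀ k, c (T^[k] x) = c x := fun k => by
    induction k with
    | zero => rfl
    | succ k ih => rw [Function.iterate_succ_apply', ← ih]; exact congrFun hc _
  simp only [wSum, mul_sum, ← sum_sub_distrib, hiter]
  exact sum_congr rfl fun k _ => by ring

lemma wSum_pos (hw : ∀ x, 0 ≤ w x) {g : X → ℝ} (hg : ∀ x, 0 < g x) {n : ℕ} (hn : n ≠ 0)
    (x : X) : 0 < wSum T w g n x := by
  obtain ⟨m, rfl⟩ := Nat.exists_eq_succ_of_ne_zero hn
  rw [wSum_succ]
  have hrest : 0 ≤ wSum T w g m (T x) :=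
    sum_nonneg fun k _ => mul_nonneg (hg _).le (prod_nonneg fun j _ => hw _)
  exact add_pos_of_pos_of_nonneg (hg x) (mul_nonneg (hw x) hrest)

lemma ratio_neg (f g : X → ℝ) (n : ℕ) (x : X) :
    ratio T w (fun y => -f y) g n x = -ratio T w f g n x := by
  simp only [ratio, wSum_neg, neg_div]

lemma exists_wSum_sub_mul_pos_iff (hw : ∀ x, 0 ≤ w x) {f g c : X → ℝ} (hg : ∀ x, 0 < g x)
    (hc : c ∘ T = c) (x : X) :
    (∃ n, 0 < wSum T w (fun y => f y - c y * g y) n x) ↔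
      ∃ n, c x < ratio T w f g (n + 1) x := by
  constructor
  · rintro ⟨n, hn⟩
    obtain ⟨m, rfl⟩ : ∃ m, n = m + 1 :=
      Nat.exists_eq_succ_of_ne_zero (by rintro rfl; simp at hn)
    refine ⟨m, ?_⟩
    rw [wSum_sub_mul_of_comp_eq hc, sub_pos] at hn
    exact (lt_div_iff₀ (wSum_pos hw hg m.succ_ne_zero x)).2 hn
  · rintro ⟨n, hn⟩
    refine ⟨n + 1, ?_⟩
    rw [wSum_sub_mul_of_comp_eq hc, sub_pos]
    exact (lt_div_iff₀ (wSum_pos hw hg n.succ_ne_zero x)).1 hn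

end WeightedSums

namespace IsTWInvariant

variable {X : Type*} [MeasurableSpace X] {T : X → X} {w : X → ℝ} {μ : Measure X}

lemma map_withDensity_eq (hT : Measurable T) (hinv : IsTWInvariant T w μ) :
    (μ.withDensity fun x => ENNReal.ofReal (w x)).map T = μ := by
  ext B hB
  rw [Measure.map_apply hT hB, withDensity_apply _ (hT hB), hinv B hB]

variable (hT : Measurable T) (hwm : Measurable w) (hw : ∀ x, 0 ≤ w x)
  (hinv : IsTWInvariant T w μ) {u : X → ℝ}
include hT hwm hw hinv

lemma integrable_mul_comp (hu : Integrable u μ) : Integrable (fun x => w x * u (T x)) μ := by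
  rw [← hinv.map_withDensity_eq hT] at hu
  have := (integrable_map_measure hu.1 hT.aemeasurable).1 hu
  rw [integrable_withDensity_iff_integrable_smul' hwm.ennreal_ofReal
    (ae_of_all _ fun _ => ENNReal.ofReal_lt_top)] at this
  simpa [ENNReal.toReal_ofReal (hw _)] using this

lemma integral_mul_comp (hu : Integrable u μ) : ∫ x, w x * u (T x) ∂μ = ∫ x, u x ∂μ := by
  conv_rhs => rw [← hinv.map_withDensity_eq hT]
  rw [integral_map hT.aemeasurable (by rw [hinv.map_withDensity_eq hT]; exact hu.1),
    integral_withDensity_eq_integral_toReal_smul hwm.ennreal_ofReal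
      (ae_of_all _ fun _ => ENNReal.ofReal_lt_top)]
  simp [ENNReal.toReal_ofReal (hw _)]

end IsTWInvariant

noncomputable def maxWSum {X : Type*} (T : X → X) (w φ : X → ℝ) (N : ℕ) : X → ℝ :=
  (range (N + 1)).sup' nonempty_range_add_one (wSum T w φ)

section Maximal

variable {X : Type*} {T : X → X} {w φ : X → ℝ}

lemma maxWSum_apply (N : ℕ) (x : X) :
    maxWSum T w φ N x = (range (N + 1)).sup' nonempty_range_add_one fun n => wSum T w φ n x :=
  Finset.sup'_apply _ _ _

lemma wSum_le_maxWSum {n N : ℕ} (hn : n ≤ N) (x : X) : wSum T w φ n x ≤ maxWSum T w φ N x := by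
  rw [maxWSum_apply]
  exact le_sup' (fun n => wSum T w φ n x) (mem_range.2 (Nat.lt_succ_of_le hn))

lemma maxWSum_nonneg (N : ℕ) (x : X) : 0 ≤ maxWSum T w φ N x := by
  simpa using wSum_le_maxWSum (T := T) (w := w) (φ := φ) N.zero_le x

lemma monotone_maxWSum (x : X) : Monotone fun N => maxWSum T w φ N x := fun N M hNM => by
  simp only [maxWSum_apply]
  exact sup'_mono _ (range_subset_range.2 (Nat.succ_le_succ hNM)) _

lemma maxWSum_pos_iff (N : ℕ) (x : X) :
    0 < maxWSum T w φ N x ↔ ∃ n ≤ N, 0 < wSum T w φ n x := by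
  simp [maxWSum_apply, lt_sup'_iff]

lemma iUnion_setOf_maxWSum_pos :
    ⋃ N, {x | 0 < maxWSum T w φ N x} = {x | ∃ n, 0 < wSum T w φ n x} := by
  ext x
  simp only [Set.mem_iUnion, Set.mem_ofPred_eq, maxWSum_pos_iff]
  exact ⟨fun ⟨_, n, _, hn⟩ => ⟨n, hn⟩, fun ⟨n, hn⟩ => ⟨n, n, le_rfl, hn⟩⟩

/-- Garsia's pointwise inequality: where `maxWSum` is positive it is attained by some `S^{n+1}`,
and `S^{n+1}_φ = φ + w · S^n_φ ∘ T ≤ φ + w · maxWSum ∘ T`. -/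
lemma maxWSum_le_mul_comp_add_indicator (hw : ∀ x, 0 ≤ w x) (N : ℕ) (x : X) :
    maxWSum T w φ N x ≤
      w x * maxWSum T w φ N (T x) + {y | 0 < maxWSum T w φ N y}.indicator φ x := by
  by_cases hpos : 0 < maxWSum T w φ N x
  · obtain ⟨n, hn, hmax⟩ := exists_mem_eq_sup' nonempty_range_add_one fun n => wSum T w φ n x
    rw [← maxWSum_apply] at hmax
    obtain ⟨m, rfl⟩ : ∃ m, n = m + 1 := Nat.exists_eq_succ_of_ne_zero <| by
      rintro rfl
      rw [hmax, wSum_zero] at hpos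
      exact lt_irrefl 0 hpos
    have hm : m ≤ N := by have := mem_range.1 hn; omega
    rw [Set.indicator_of_mem (show x ∈ {y | 0 < maxWSum T w φ N y} from hpos), hmax, wSum_succ]
    have := wSum_le_maxWSum (T := T) (w := w) (φ := φ) hm (T x)
    nlinarith [hw x]
  · rw [Set.indicator_of_notMem (show x ∉ {y | 0 < maxWSum T w φ N y} from hpos), add_zero]
    exact (not_lt.1 hpos).trans (mul_nonneg (hw x) (maxWSum_nonneg N (T x)))

variable [MeasurableSpace X] {μ : Measure X}
  (hT : Measurable T) (hwm : Measurable w) (hw : ∀ x, 0 ≤ w x) (hinv : IsTWInvariant T w μ)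
include hT hwm hw hinv

lemma integrable_wSum (hφ : Integrable φ μ) (n : ℕ) : Integrable (wSum T w φ n) μ := by
  induction n with
  | zero => exact (integrable_zero X ℝ μ).congr (ae_of_all _ fun x => (wSum_zero φ x).symm)
  | succ n ih =>
    simp only [funext (wSum_succ φ n)]
    exact hφ.add (hinv.integrable_mul_comp hT hwm hw ih)

lemma integrable_maxWSum (hφ : Integrable φ μ) (N : ℕ) : Integrable (maxWSum T w φ N) μ :=
  sup'_induction (p := (Integrable · μ)) _ _ (fun _ h₁ _ h₂ => h₁.sup h₂)
    fun n _ => integrable_wSum hT hwm hw hinv hφ n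

lemma setIntegral_maxWSum_pos_nonneg (hφ : Integrable φ μ) (N : ℕ) :
    0 ≤ ∫ x in {x | 0 < maxWSum T w φ N x}, φ x ∂μ := by
  have hM := integrable_maxWSum hT hwm hw hinv hφ N
  have hA : NullMeasurableSet {x | 0 < maxWSum T w φ N x} μ :=
    nullMeasurableSet_lt aemeasurable_const hM.aemeasurable
  have hMT := hinv.integrable_mul_comp hT hwm hw hM
  have := integral_mono hM (hMT.add (hφ.indicator₀ hA))
    (maxWSum_le_mul_comp_add_indicator hw N)
  simp only [Pi.add_apply] at this
  rw [integral_add hMT (hφ.indicator₀ hA), hinv.integral_mul_comp hT hwm hw hM,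
    integral_indicator₀ hA] at this
  linarith

theorem setIntegral_exists_wSum_pos_nonneg (hφ : Integrable φ μ) :
    0 ≤ ∫ x in {x | ∃ n, 0 < wSum T w φ n x}, φ x ∂μ := by
  rw [← iUnion_setOf_maxWSum_pos]
  refine ge_of_tendsto' (tendsto_setIntegral_of_monotone₀ (fun N => ?_) (fun N M hNM x hx => ?_)
    hφ.integrableOn) (setIntegral_maxWSum_pos_nonneg hT hwm hw hinv hφ)
  · exact nullMeasurableSet_lt aemeasurable_const
      (integrable_maxWSum hT hwm hw hinv hφ N).aemeasurable
  · exact hx.trans_le (monotone_maxWSum x hNM)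

end Maximal

lemma tendsto_atBot_of_eventually_le_of_lt_limsup {ι : Type*} {l : Filter ι} {u : ι → ℝ}
    {a : ℝ} (hu : ∀ᶠ n in l, u n ≤ a) (ha : a < limsup u l) : Tendsto u l atBot := by
  by_cases hbdd : BddBelow {b | ∀ᶠ n in l, u n ≤ b}
  · exact absurd (csInf_le hbdd hu) (by rwa [← limsup_eq, not_le])
  · refine tendsto_atBot.2 fun b => ?_
    obtain ⟨c, hc, hcb⟩ := not_bddBelow_iff.1 hbdd b
    exact hc.mono fun n hn => hn.trans hcb.le

section Ratio

variable {X : Type*} [MeasurableSpace X] {T : X → X} {w f g : X → ℝ} {μ : Measure X}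
  (hT : Measurable T) (hwm : Measurable w) (hw : ∀ x, 0 ≤ w x) (hinv : IsTWInvariant T w μ)
  (hg : ∀ x, 0 < g x) (hf : Integrable f μ) (hgi : Integrable g μ)
include hT hwm hw hinv hg hf hgi

/-- Where the ratios tend to `-∞`, every `S_{-f - c g}` eventually turns positive, so the maximal
lemma gives `c ∫_D g ≤ ∫ |f|` for all `c > 0`. -/
lemma measure_setOf_tendsto_ratio_atBot :
    μ {x | Tendsto (fun n => ratio T w f g n x) atTop atBot} = 0 := by
  set D := {x | Tendsto (fun n => ratio T w f g n x) atTop atBot}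
  have hD : ∀ c : ℝ, D ⊆ {x | ∃ n, 0 < wSum T w (fun y => -f y - c * g y) n x} := by
    intro c x hx
    obtain ⟨n, hn⟩ := ((hx.comp (tendsto_add_atTop_nat 1)).eventually_lt_atBot (-c)).exists
    refine (exists_wSum_sub_mul_pos_iff hw hg (c := fun _ => c) rfl x).2 ⟨n, ?_⟩
    rw [ratio_neg]
    exact lt_neg_of_lt_neg hn
  have hbound : ∀ c > 0, ∫ x in D, g x ∂μ ≤ (∫ x, |f x| ∂μ) / c := by
    intro c hc
    set S := {x | ∃ n, 0 < wSum T w (fun y => -f y - c * g y) n x}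
    have hS := setIntegral_exists_wSum_pos_nonneg (φ := fun y => -f y - c * g y) hT hwm hw hinv
      (hf.neg.sub (hgi.const_mul c))
    rw [integral_sub (f := fun x => -f x) hf.neg.integrableOn (hgi.const_mul c).integrableOn,
      integral_const_mul, integral_neg] at hS
    rw [le_div_iff₀' hc]
    calc c * ∫ x in D, g x ∂μ ≤ c * ∫ x in S, g x ∂μ :=
          mul_le_mul_of_nonneg_left (setIntegral_mono_set hgi.integrableOn
            (ae_of_all _ fun x => (hg x).le) (hD c).eventuallyLE) hc.le
      _ ≤ -∫ x in S, f x ∂μ := by linarith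
      _ ≤ ∫ x in S, |f x| ∂μ := (neg_le_abs _).trans (abs_integral_le_integral_abs)
      _ ≤ ∫ x, |f x| ∂μ := setIntegral_le_integral hf.abs (ae_of_all _ fun x => abs_nonneg _)
  have hzero : ∫ x in D, g x ∂μ = 0 :=
    le_antisymm (ge_of_tendsto (tendsto_const_nhds.div_atTop tendsto_id)
      ((eventually_gt_atTop 0).mono hbound)) (integral_nonneg fun x => (hg x).le)
  have hg0 := (integral_eq_zero_iff_of_nonneg (fun x => (hg x).le) hgi.integrableOn).1 hzero
  exact Measure.restrict_eq_zero.1 (ae_eq_bot.1 (eventually_false_iff_eq_bot.1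
    (hg0.mono fun x hx => (hg x).ne' hx)))

lemma integral_sub_mul_nonneg_of_lt_limsup {c : X → ℝ} (hc : c ∘ T = c)
    (hlt : ∀ x, c x < limsup (fun n => ratio T w f g n x) atTop)
    (hcg : Integrable (fun x => c x * g x) μ) :
    0 ≤ ∫ x, f x - c x * g x ∂μ := by
  set A := {x | ∃ n, 0 < wSum T w (fun y => f y - c y * g y) n x}
  have hAc : Aᶜ ⊆ {x | Tendsto (fun n => ratio T w f g n x) atTop atBot} := by
    intro x hx
    have hle : ∀ n, ratio T w f g (n + 1) x ≤ c x := by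
      simpa [A, exists_wSum_sub_mul_pos_iff hw hg hc] using hx
    refine tendsto_atBot_of_eventually_le_of_lt_limsup ?_ (hlt x)
    exact (eventually_ne_atTop 0).mono fun n hn => by
      obtain ⟨m, rfl⟩ := Nat.exists_eq_succ_of_ne_zero hn
      exact hle m
  have hA : ∀ᵐ x ∂μ, x ∈ A :=
    ae_iff.2 (measure_mono_null hAc (measure_setOf_tendsto_ratio_atBot hT hwm hw hinv hg hf hgi))
  rw [← Measure.restrict_eq_self_of_ae_mem hA]
  exact setIntegral_exists_wSum_pos_nonneg hT hwm hw hinv (hf.sub hcg)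

end Ratio

theorem integral_ge_of_le_limsup_general {X : Type*} [MeasurableSpace X]
    (T : X → X) (f g h w : X → ℝ)
    (hT : Measurable T) (hwm : Measurable w)
    (hg : ∀ x, 0 < g x) (hw : ∀ x, 0 < w x)
    (hhinv : h ∘ T = h)
    (hle : ∀ x, h x ≤ limsup (fun n : ℕ => ratio T w f g n x) atTop)
    (μ : Measure X) (hinv : IsTWInvariant T w μ)
    (hfint : Integrable f μ) (hgint : Integrable g μ)
    (hghint : Integrable (fun x => g x * h x) μ) :
    ∫ x, g x * h x ∂μ ≤ ∫ x, f x ∂μ := by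
  have hε : ∀ ε > 0, ∫ x, g x * h x ∂μ ≤ ∫ x, f x ∂μ + ε * ∫ x, g x ∂μ := by
    intro ε hε
    have hcg : Integrable (fun x => (h x - ε) * g x) μ :=
      (hghint.sub (hgint.const_mul ε)).congr <| ae_of_all _ fun x => by
        simp only [Pi.sub_apply]
        ring
    have hcT : (fun x => h x - ε) ∘ T = fun x => h x - ε := by
      ext x
      simp only [Function.comp_apply, ← congrFun hhinv x]
    have hnonneg := integral_sub_mul_nonneg_of_lt_limsup hT hwm (fun x => (hw x).le) hinv hg
      hfint hgint hcT (fun x => (sub_lt_self (h x) hε).trans_le (hle x)) hcg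
    have hsplit : (fun x => f x - (h x - ε) * g x) = fun x => f x - g x * h x + ε * g x := by
      ext x
      ring
    rw [hsplit, integral_add (f := fun x => f x - g x * h x) (hfint.sub hghint)
      (hgint.const_mul ε), integral_sub hfint hghint, integral_const_mul] at hnonneg
    linarith
  have hlim : Tendsto (fun ε => ∫ x, f x ∂μ + ε * ∫ x, g x ∂μ) (𝓝[>] 0) (𝓝 (∫ x, f x ∂μ)) := by
    refine tendsto_nhdsWithin_of_tendsto_nhds ?_
    exact (by fun_prop : Continuous fun ε => ∫ x, f x ∂μ + ε * ∫ x, g x ∂μ).tendsto' 0 _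
      (by simp)
  exact ge_of_tendsto hlim (eventually_nhdsWithin_of_forall hε)

theorem integral_ge_of_le_limsup {X : Type*} [MeasurableSpace X]
    (T : X → X) (f g h w : X → ℝ)
    (hT : Measurable T) (hf : Measurable f) (hgm : Measurable g)
    (hhm : Measurable h) (hwm : Measurable w)
    (hg : ∀ x, 0 < g x) (hw : ∀ x, 0 < w x)
    (hhinv : h ∘ T = h)
    (hle : ∀ x, h x ≤ limsup (fun n : ℕ => ratio T w f g n x) atTop)
    (μ : Measure X) (hcons : IsConservative T μ) (hinv : IsTWInvariant T w μ)
    (hfint : Integrable f μ) (hgint : Integrable g μ)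
    (hghint : Integrable (fun x => g x * h x) μ) :
    ∫ x, g x * h x ∂μ ≤ ∫ x, f x ∂μ :=
  integral_ge_of_le_limsup_general T f g h w hT hwm hg hw hhinv hle μ hinv hfint hgint hghint
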